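/- arXiv:2001.04452 — 3 statements merged into one kernel-verified Lean document; each statement's English description precedes it below -/
import Mathlib

section
/- Let α ∈ (0,1) and λ ≥ 0, and let the temporal mesh satisfy λ τ_j^α < 1/Γ(2−α) for all j = 1,…,M. If two real sequences (V^j)_{j=0}^M and (B^j)_{j=0}^M satisfy V⁰ ≤ B⁰ and (δ_t^α V^m) − λ V^m ≤ (δ_t^α B^m) − λ B^m for all m = 1,…,M, then V^m ≤ B^m for all m = 0,…,M. -/
open Real MeasureTheory

/-! Put `W = B - V`; by linearity `lam * W m ≤ δ_t^α W m`. The L1 operator is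
`∑ j, (W j - W (j - 1)) * d j / Γ(1 - α)`, where `d j` is the mean of the kernel `(t m - s) ^ (-α)`
over `[t (j - 1), t j]`. The kernel increases in `s`, so these means increase in `j`, and summation
by parts together with `W j ≥ 0` for `j < m` bounds the sum by `d m * W m`. As
`d m = τ_m ^ (-α) / (1 - α)` and `Γ(2 - α) = (1 - α) Γ(1 - α)`, the mesh condition reads
`Γ(1 - α) * lam < d m`, which forces `W m ≥ 0`; strong induction on `m` concludes. -/

/-- The L1 discrete Caputo operator of order `α` on the temporal mesh `t`. -/
noncomputable def deltaL1 (α : ℝ) (t : ℕ → ℝ) (V : ℕ → ℝ) (m : ℕ) : ℝ :=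
  (1 / Real.Gamma (1 - α)) *
    ∑ j ∈ Finset.Icc 1 m,
      ((V j - V (j - 1)) / (t j - t (j - 1))) *
        ∫ s in (t (j - 1))..(t j), (t m - s) ^ (-α)

/-- Summation by parts:
`∑ (W j - W (j - 1)) d j = d m W m - d 1 W 0 - ∑_{1 ≤ j < m} W j (d (j + 1) - d j)`. -/
lemma sum_Icc_sub_mul_le (d W : ℕ → ℝ) {m : ℕ} (hm : 1 ≤ m) (hd₁ : 0 ≤ d 1)
    (hd : ∀ j, 1 ≤ j → j < m → d j ≤ d (j + 1)) (hW : ∀ j < m, 0 ≤ W j) :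
    ∑ j ∈ Finset.Icc 1 m, (W j - W (j - 1)) * d j ≤ d m * W m := by
  induction m, hm using Nat.le_induction with
  | base =>
    have := mul_nonneg hd₁ (hW 0 one_pos)
    simp only [Finset.Icc_self, Finset.sum_singleton, Nat.sub_self]
    linarith
  | succ n hn ih =>
    have hsum := ih (fun j h₁ h₂ => hd j h₁ (by omega)) (fun j hj => hW j (by omega))
    have hstep := mul_le_mul_of_nonneg_left (hd n hn n.lt_succ_self) (hW n n.lt_succ_self)
    rw [Finset.sum_Icc_succ_top (by omega), Nat.add_sub_cancel]
    nlinarith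

noncomputable def kernelMean (α c a b : ℝ) : ℝ :=
  (∫ s in a..b, (c - s) ^ (-α)) / (b - a)

lemma deltaL1_eq_sum_kernelMean (α : ℝ) (t V : ℕ → ℝ) (m : ℕ) :
    deltaL1 α t V m = (1 / Gamma (1 - α)) *
      ∑ j ∈ Finset.Icc 1 m, (V j - V (j - 1)) * kernelMean α (t m) (t (j - 1)) (t j) := by
  simp only [deltaL1, kernelMean, div_mul_eq_mul_div, mul_div_assoc]

lemma deltaL1_sub (α : ℝ) (t V B : ℕ → ℝ) (m : ℕ) :
    deltaL1 α t (fun j => B j - V j) m = deltaL1 α t B m - deltaL1 α t V m := by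
  simp only [deltaL1_eq_sum_kernelMean, ← mul_sub, ← Finset.sum_sub_distrib]
  congr 1
  refine Finset.sum_congr rfl fun j _ => ?_
  ring

lemma integral_sub_rpow_neg {α : ℝ} (hα : α < 1) (a b c : ℝ) :
    ∫ s in a..b, (c - s) ^ (-α) = ((c - a) ^ (1 - α) - (c - b) ^ (1 - α)) / (1 - α) := by
  rw [intervalIntegral.integral_comp_sub_left (fun u : ℝ => u ^ (-α)) c,
    integral_rpow (Or.inl (by linarith))]
  ring_nf

lemma kernelMean_eq {α : ℝ} (hα : α < 1) (a b c : ℝ) :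
    kernelMean α c a b =
      ((c - a) ^ (1 - α) - (c - b) ^ (1 - α)) / ((c - a) - (c - b)) / (1 - α) := by
  rw [kernelMean, integral_sub_rpow_neg hα, sub_sub_sub_cancel_left, div_right_comm]

lemma kernelMean_nonneg (α : ℝ) {a b c : ℝ} (hab : a ≤ b) (hbc : b ≤ c) :
    0 ≤ kernelMean α c a b :=
  div_nonneg (intervalIntegral.integral_nonneg hab fun s hs => rpow_nonneg (by linarith [hs.2]) _)
    (sub_nonneg.2 hab)

lemma kernelMean_self_right {α : ℝ} (hα : α < 1) {a b : ℝ} (hab : a < b) :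
    kernelMean α b a b = (b - a) ^ (-α) / (1 - α) := by
  have hba : 0 < b - a := sub_pos.2 hab
  rw [kernelMean_eq hα, sub_self, zero_rpow (by linarith), sub_zero, sub_zero,
    rpow_sub hba, rpow_one, rpow_neg hba.le]
  field_simp

/-- The slopes of the concave function `u ↦ u ^ (1 - α)` decrease. -/
lemma kernelMean_le_kernelMean {α : ℝ} (hα₀ : 0 ≤ α) (hα₁ : α < 1) {a b c d : ℝ}
    (hab : a < b) (hbc : b < c) (hcd : c ≤ d) :
    kernelMean α d a b ≤ kernelMean α d b c := by
  have hconc := concaveOn_rpow (p := 1 - α) (by linarith) (by linarith)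
  have hslope := hconc.slope_anti_adjacent (x := d - c) (y := d - b) (z := d - a)
    (Set.mem_Ici.2 (by linarith)) (Set.mem_Ici.2 (by linarith)) (by linarith) (by linarith)
  rw [kernelMean_eq hα₁, kernelMean_eq hα₁]
  exact div_le_div_of_nonneg_right hslope (by linarith)

lemma mul_Gamma_lt_rpow_neg_div {α lam τ : ℝ} (hα : α < 1) (hτ : 0 < τ)
    (hmesh : lam * τ ^ α < 1 / Gamma (2 - α)) :
    Gamma (1 - α) * lam < τ ^ (-α) / (1 - α) := by
  have h1α : 0 < 1 - α := sub_pos.2 hα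
  have hΓ : Gamma (2 - α) = (1 - α) * Gamma (1 - α) := by
    rw [show 2 - α = (1 - α) + 1 by ring, Gamma_add_one h1α.ne']
  rw [hΓ, lt_div_iff₀ (mul_pos h1α (Gamma_pos_of_pos h1α))] at hmesh
  have hτα : τ ^ α * τ ^ (-α) = 1 := by rw [← rpow_add hτ, add_neg_cancel, rpow_zero]
  rw [lt_div_iff₀ h1α]
  calc Gamma (1 - α) * lam * (1 - α)
      = lam * τ ^ α * ((1 - α) * Gamma (1 - α)) * τ ^ (-α) := by
        linear_combination (-(Gamma (1 - α) * lam * (1 - α))) * hτα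
    _ < 1 * τ ^ (-α) := mul_lt_mul_of_pos_right hmesh (rpow_pos_of_pos hτ _)
    _ = τ ^ (-α) := one_mul _

lemma nonneg_of_mul_le_deltaL1 {α lam : ℝ} (hα₀ : 0 ≤ α) (hα₁ : α < 1) {t W : ℕ → ℝ} {m : ℕ}
    (hm : 1 ≤ m) (ht : ∀ j < m, t j < t (j + 1))
    (hmesh : lam * (t m - t (m - 1)) ^ α < 1 / Gamma (2 - α))
    (hW : ∀ j < m, 0 ≤ W j) (h : lam * W m ≤ deltaL1 α t W m) :
    0 ≤ W m := by
  have htm : StrictMonoOn t (Set.Iic m) := strictMonoOn_Iic_of_lt_succ ht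
  have hlt : ∀ {i j}, i < j → j ≤ m → t i < t j := fun hij hj =>
    htm (Set.mem_Iic.2 (by omega)) (Set.mem_Iic.2 hj) hij
  have hτ : 0 < t m - t (m - 1) := sub_pos.2 (hlt (by omega) le_rfl)
  set d : ℕ → ℝ := fun j => kernelMean α (t m) (t (j - 1)) (t j)
  have hsum : ∑ j ∈ Finset.Icc 1 m, (W j - W (j - 1)) * d j ≤ d m * W m :=
    sum_Icc_sub_mul_le d W hm
      (kernelMean_nonneg α (hlt one_pos hm).le (htm.monotoneOn (Set.mem_Iic.2 hm) (by simp) hm))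
      (fun j hj hjm => by
        simpa [d] using kernelMean_le_kernelMean hα₀ hα₁ (hlt (by omega : j - 1 < j) hjm.le)
          (hlt j.lt_succ_self hjm) (htm.monotoneOn (by simpa using hjm) (by simp) hjm))
      hW
  have hdm : d m = (t m - t (m - 1)) ^ (-α) / (1 - α) :=
    kernelMean_self_right hα₁ (hlt (by omega) le_rfl)
  have hΓ : 0 < Gamma (1 - α) := Gamma_pos_of_pos (sub_pos.2 hα₁)
  have hdom : Gamma (1 - α) * lam * W m ≤ d m * W m := by
    rw [deltaL1_eq_sum_kernelMean, one_div, inv_mul_eq_div, le_div_iff₀' hΓ] at h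
    linarith
  refine nonneg_of_mul_nonneg_right ?_ (sub_pos.2 (hdm ▸ mul_Gamma_lt_rpow_neg_div hα₁ hτ hmesh))
  linarith [sub_mul (d m) (Gamma (1 - α) * lam) (W m)]

theorem stmt1_general
    (α lam : ℝ) (hα : α ∈ Set.Ioo (0 : ℝ) 1)
    (M : ℕ) (t : ℕ → ℝ)
    (hmono : ∀ j, j < M → t j < t (j + 1))
    (hmesh : ∀ j, 1 ≤ j → j ≤ M →
      lam * (t j - t (j - 1)) ^ α < 1 / Real.Gamma (2 - α))
    (V B : ℕ → ℝ)
    (h0 : V 0 ≤ B 0)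
    (hcomp : ∀ m, 1 ≤ m → m ≤ M →
      deltaL1 α t V m - lam * V m ≤ deltaL1 α t B m - lam * B m) :
    ∀ m, m ≤ M → V m ≤ B m := by
  intro m
  induction m using Nat.strong_induction_on with
  | _ m ih =>
    intro hmM
    rcases Nat.eq_zero_or_pos m with rfl | hm
    · exact h0
    · refine sub_nonneg.1 (nonneg_of_mul_le_deltaL1 (W := fun j => B j - V j) hα.1.le hα.2 hm
        (fun j hj => hmono j (by omega)) (hmesh m hm hmM)
        (fun j hj => sub_nonneg.2 (ih j hj (by omega))) ?_)
      rw [deltaL1_sub]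
      linarith [hcomp m hm hmM]

theorem stmt1
    (α T lam : ℝ) (hα : α ∈ Set.Ioo (0 : ℝ) 1) (hT : 0 < T) (hlam : 0 ≤ lam)
    (M : ℕ) (hM : 1 ≤ M) (t : ℕ → ℝ)
    (ht0 : t 0 = 0) (htM : t M = T)
    (hmono : ∀ j, j < M → t j < t (j + 1))
    (hmesh : ∀ j, 1 ≤ j → j ≤ M →
      lam * (t j - t (j - 1)) ^ α < 1 / Real.Gamma (2 - α))
    (V B : ℕ → ℝ)
    (h0 : V 0 ≤ B 0)
    (hcomp : ∀ m, 1 ≤ m → m ≤ M →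
      deltaL1 α t V m - lam * V m ≤ deltaL1 α t B m - lam * B m) :
    ∀ m, m ≤ M → V m ≤ B m :=
  stmt1_general α lam hα M t hmono hmesh V B h0 hcomp
end

section
/- Let α ∈ (0,1). There exists a constant C > 0 depending only on α (in particular independent of T and of the mesh) such that for every T > 0, every temporal mesh on [0,T], and every real sequence (V^j)_{j=0}^M with V⁰ = 0 and |δ_t^α V^j| ≤ (τ/t_j)^α for all j = 1,…,M, one has |V^j| ≤ C τ^α for all j = 1,…,M. -/
open Real MeasureTheory

/-- Lower bound for the rpow difference: `(1-α)(A-B)A^(-α) ≤ A^(1-α) - B^(1-α)`. -/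
lemma lemA {α A B : ℝ} (hα0 : 0 < α) (hα1 : α < 1) (hB : 0 ≤ B) (hAB : B < A) :
    (1 - α) * (A - B) * A ^ (-α) ≤ A ^ (1 - α) - B ^ (1 - α) := by
  have hA : 0 < A := lt_of_le_of_lt hB hAB
  have key : A ^ α * B ^ (1 - α) ≤ α * A + (1 - α) * B :=
    Real.geom_mean_le_arith_mean2_weighted hα0.le (by linarith) hA.le hB (by ring)
  have hpos : 0 < A ^ (-α) := Real.rpow_pos_of_pos hA _
  have h2 : A ^ (-α) * (A ^ α * B ^ (1 - α)) = B ^ (1 - α) := by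
    rw [← mul_assoc, ← Real.rpow_add hA]; simp
  have h1 : A ^ (1 - α) = A ^ (-α) * A := by
    rw [← Real.rpow_add_one hA.ne' (-α)]; congr 1; ring
  nlinarith [mul_le_mul_of_nonneg_left key hpos.le]

/-- Upper bound for the rpow difference: `A^(1-α) - B^(1-α) ≤ (1-α)(A-B)B^(-α)`. -/
lemma lemB {α A B : ℝ} (hα0 : 0 < α) (hα1 : α < 1) (hB : 0 < B) (hAB : B ≤ A) :
    A ^ (1 - α) - B ^ (1 - α) ≤ (1 - α) * (A - B) * B ^ (-α) := by
  have hA : 0 < B := hB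
  have key : A ^ (1 - α) * B ^ α ≤ (1 - α) * A + α * B :=
    Real.geom_mean_le_arith_mean2_weighted (by linarith) hα0.le (by linarith) hB.le (by ring)
  have hpos : 0 < B ^ (-α) := Real.rpow_pos_of_pos hB _
  have h2 : A ^ (1 - α) * B ^ α * B ^ (-α) = A ^ (1 - α) := by
    rw [mul_assoc, ← Real.rpow_add hB]; simp
  have h1 : B ^ (1 - α) = B ^ (-α) * B := by
    rw [← Real.rpow_add_one hB.ne' (-α)]; congr 1; ring
  nlinarith [mul_le_mul_of_nonneg_right key hpos.le]

/-- Abel summation by parts for the L1 sum. -/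
lemma abel_sum (c V : ℕ → ℝ) (hV0 : V 0 = 0) :
    ∀ m, 1 ≤ m → ∑ j ∈ Finset.Icc 1 m, c j * (V j - V (j - 1)) =
      c m * V m - ∑ j ∈ Finset.Icc 1 (m - 1), (c (j + 1) - c j) * V j := by
  intro m hm
  induction m with
  | zero => omega
  | succ n ih =>
    rcases Nat.lt_or_ge 1 (n + 1) with h | h
    · have hn : 1 ≤ n := by omega
      have e1 : ∑ j ∈ Finset.Icc 1 (n + 1), c j * (V j - V (j - 1)) =
          (∑ j ∈ Finset.Icc 1 n, c j * (V j - V (j - 1))) +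
            c (n + 1) * (V (n + 1) - V (n + 1 - 1)) :=
        Finset.sum_Icc_succ_top (by omega) _
      have e2 : ∑ j ∈ Finset.Icc 1 (n + 1 - 1), (c (j + 1) - c j) * V j =
          (∑ j ∈ Finset.Icc 1 (n - 1), (c (j + 1) - c j) * V j) +
            (c (n + 1) - c n) * V n := by
        have h3 : n + 1 - 1 = (n - 1) + 1 := by omega
        have h4 : n - 1 + 1 = n := by omega
        rw [h3, Finset.sum_Icc_succ_top (by omega), h4]
      rw [e1, e2, ih hn]
      simp only [Nat.add_sub_cancel]
      ring
    · have hn : n = 0 := by omega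
      subst hn
      simp [hV0]

/-- Telescoping. -/
lemma telescope (c : ℕ → ℝ) (m : ℕ) (hm : 1 ≤ m) :
    ∑ j ∈ Finset.Icc 1 (m - 1), (c (j + 1) - c j) = c m - c 1 := by
  have h := Finset.sum_range_sub (fun i => c (i + 1)) (m - 1)
  have hconv : ∑ j ∈ Finset.Icc 1 (m - 1), (c (j + 1) - c j) =
      ∑ i ∈ Finset.range (m - 1), (c (1 + i + 1) - c (1 + i)) := by
    have h5 : Finset.Icc 1 (m - 1) = Finset.Ico 1 (m - 1 + 1) := by
      rw [Finset.Ico_add_one_right_eq_Icc]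
    rw [h5, Finset.sum_Ico_eq_sum_range]
    have h6 : m - 1 + 1 - 1 = m - 1 := by omega
    rw [h6]
  rw [hconv]
  have : ∀ i, c (1 + i + 1) - c (1 + i) = c (i + 1 + 1) - c (i + 1) := by
    intro i; congr 2 <;> omega
  simp_rw [this]
  rw [h]
  congr 2
  omega

theorem stmt7
    (α : ℝ) (hα : α ∈ Set.Ioo (0 : ℝ) 1) :
    ∃ C > (0 : ℝ), ∀ (T : ℝ), 0 < T → ∀ (M : ℕ) (t : ℕ → ℝ),
      1 ≤ M → t 0 = 0 → t M = T →
      (∀ j, j < M → t j < t (j + 1)) →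
      ∀ V : ℕ → ℝ, V 0 = 0 →
      (∀ j, 1 ≤ j → j ≤ M → |deltaL1 α t V j| ≤ (t 1 / t j) ^ α) →
      ∀ j, 1 ≤ j → j ≤ M → |V j| ≤ C * (t 1) ^ α := by
  obtain ⟨hα0, hα1⟩ := hα
  have hGpos : 0 < Real.Gamma (1 - α) := Real.Gamma_pos_of_pos (by linarith)
  refine ⟨Real.Gamma (1 - α), hGpos, ?_⟩
  intro T hT M t hM ht0 htM hmesh V hV0 hbound
  set G := Real.Gamma (1 - α) with hGdef
  -- strict monotonicity of the mesh
  have tlt : ∀ j, j ≤ M → ∀ i, i < j → t i < t j := by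
    intro j
    induction j with
    | zero => omega
    | succ n ih =>
      intro hj i hi
      have h1 : t n < t (n + 1) := hmesh n (by omega)
      rcases Nat.lt_succ_iff_lt_or_eq.mp hi with h | h
      · exact lt_trans (ih (by omega) i h) h1
      · exact h ▸ h1
  have ht1 : 0 < t 1 := ht0 ▸ tlt 1 hM 0 one_pos
  intro m
  induction m using Nat.strong_induction_on with
  | _ m ih =>
  intro hm1 hmM
  -- positive times
  have htm : 0 < t m := ht0 ▸ tlt m hmM 0 hm1
  -- the explicit coefficients
  set c : ℕ → ℝ := fun j =>
    (((t m - t (j - 1)) ^ (1 - α) - (t m - t j) ^ (1 - α)) / (1 - α)) / (G * (t j - t (j - 1)))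
    with hcdef
  have hτpos : ∀ j, 1 ≤ j → j ≤ m → 0 < t j - t (j - 1) := by
    intro j h1 h2
    have := tlt j (le_trans h2 hmM) (j - 1) (by omega)
    linarith
  -- rewrite deltaL1 with the explicit coefficients
  have hdelta : deltaL1 α t V m = ∑ j ∈ Finset.Icc 1 m, c j * (V j - V (j - 1)) := by
    rw [deltaL1, Finset.mul_sum]
    refine Finset.sum_congr rfl ?_
    intro j hj
    rw [Finset.mem_Icc] at hj
    have hI : (∫ s in (t (j - 1))..(t j), (t m - s) ^ (-α)) =
        ((t m - t (j - 1)) ^ (1 - α) - (t m - t j) ^ (1 - α)) / (1 - α) := by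
      have h1 : (∫ s in (t (j - 1))..(t j), (t m - s) ^ (-α)) =
          ∫ x in (t m - t j)..(t m - t (j - 1)), x ^ (-α) :=
        intervalIntegral.integral_comp_sub_left (fun x => x ^ (-α)) (t m)
      rw [h1, integral_rpow (Or.inl (by linarith))]
      rw [show -α + 1 = 1 - α by ring]
    have hτ : t j - t (j - 1) ≠ 0 := by
      have := hτpos j hj.1 hj.2; linarith
    have h1α : (1 : ℝ) - α ≠ 0 := by linarith
    rw [hI]
    simp only [hcdef]
    field_simp
    ring
  -- lower bound: c j ≥ (t m - t (j-1))^(-α) / G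
  have hc_low : ∀ j, 1 ≤ j → j ≤ m → (t m - t (j - 1)) ^ (-α) / G ≤ c j := by
    intro j h1 h2
    have hBA : t m - t j < t m - t (j - 1) := by
      have := hτpos j h1 h2; linarith
    have hB0 : 0 ≤ t m - t j := by
      rcases Nat.lt_or_ge j m with h | h
      · have := tlt m hmM j h; linarith
      · have : j = m := by omega
        simp [this]
    have := lemA hα0 hα1 hB0 hBA
    simp only [hcdef]
    rw [div_div, div_le_div_iff₀ hGpos (mul_pos (by linarith : (0:ℝ) < 1 - α) (mul_pos hGpos (hτpos j h1 h2)))]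
    have hτ := hτpos j h1 h2
    calc (t m - t (j - 1)) ^ (-α) * ((1 - α) * (G * (t j - t (j - 1))))
        = G * ((1 - α) * ((t m - t (j - 1)) - (t m - t j)) * (t m - t (j - 1)) ^ (-α)) := by
          ring
      _ ≤ G * ((t m - t (j - 1)) ^ (1 - α) - (t m - t j) ^ (1 - α)) := by
          exact mul_le_mul_of_nonneg_left this hGpos.le
      _ = ((t m - t (j - 1)) ^ (1 - α) - (t m - t j) ^ (1 - α)) * G := by ring
  -- upper bound: c j ≤ (t m - t j)^(-α) / G  (for j < m)
  have hc_up : ∀ j, 1 ≤ j → j < m → c j ≤ (t m - t j) ^ (-α) / G := by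
    intro j h1 h2
    have hB0 : 0 < t m - t j := by have := tlt m hmM j h2; linarith
    have hBA : t m - t j ≤ t m - t (j - 1) := by
      have := hτpos j h1 (le_of_lt h2); linarith
    have := lemB hα0 hα1 hB0 hBA
    simp only [hcdef]
    rw [div_div, div_le_div_iff₀ (mul_pos (by linarith : (0:ℝ) < 1 - α) (mul_pos hGpos (hτpos j h1 (le_of_lt h2)))) hGpos]
    have hτ := hτpos j h1 (le_of_lt h2)
    calc ((t m - t (j - 1)) ^ (1 - α) - (t m - t j) ^ (1 - α)) * G
        = G * ((t m - t (j - 1)) ^ (1 - α) - (t m - t j) ^ (1 - α)) := by ring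
      _ ≤ G * ((1 - α) * ((t m - t (j - 1)) - (t m - t j)) * (t m - t j) ^ (-α)) :=
          mul_le_mul_of_nonneg_left this hGpos.le
      _ = (t m - t j) ^ (-α) * ((1 - α) * (G * (t j - t (j - 1)))) := by ring
  -- monotonicity of coefficients
  have hc_mono : ∀ j, 1 ≤ j → j + 1 ≤ m → c j ≤ c (j + 1) := by
    intro j h1 h2
    have hup := hc_up j h1 (by omega)
    have hlow := hc_low (j + 1) (by omega) h2
    simp only [Nat.add_sub_cancel] at hlow
    linarith
  -- positivity of c m and c 1 lower bound
  have hcm_pos : 0 < c m := by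
    have := hc_low m hm1 le_rfl
    have h2 : 0 < (t m - t (m - 1)) ^ (-α) / G := by
      have : 0 < t m - t (m - 1) := hτpos m hm1 le_rfl
      positivity
    linarith
  have hc1_low : (t m) ^ (-α) / G ≤ c 1 := by
    have := hc_low 1 le_rfl hm1
    simpa [ht0] using this
  -- Abel summation
  have habel := abel_sum c V hV0 m hm1
  rw [← hdelta] at habel
  have hVm : c m * V m = deltaL1 α t V m + ∑ j ∈ Finset.Icc 1 (m - 1), (c (j + 1) - c j) * V j := by
    linarith [habel]
  -- bound the sum using the induction hypothesis
  set K : ℝ := G * t 1 ^ α with hKdef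
  have hKpos : 0 < K := by positivity
  have hsum_bound : |∑ j ∈ Finset.Icc 1 (m - 1), (c (j + 1) - c j) * V j| ≤ (c m - c 1) * K := by
    calc |∑ j ∈ Finset.Icc 1 (m - 1), (c (j + 1) - c j) * V j|
        ≤ ∑ j ∈ Finset.Icc 1 (m - 1), |(c (j + 1) - c j) * V j| :=
          Finset.abs_sum_le_sum_abs _ _
      _ ≤ ∑ j ∈ Finset.Icc 1 (m - 1), (c (j + 1) - c j) * K := by
          refine Finset.sum_le_sum ?_
          intro j hj
          rw [Finset.mem_Icc] at hj
          have hj1 : 1 ≤ j := hj.1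
          have hjm : j < m := by omega
          have hmono : 0 ≤ c (j + 1) - c j := by
            have := hc_mono j hj1 (by omega)
            linarith
          have hVj : |V j| ≤ K := ih j hjm hj1 (by omega)
          rw [abs_mul, abs_of_nonneg hmono]
          exact mul_le_mul_of_nonneg_left hVj hmono
      _ = (∑ j ∈ Finset.Icc 1 (m - 1), (c (j + 1) - c j)) * K := by
          rw [Finset.sum_mul]
      _ = (c m - c 1) * K := by rw [telescope c m hm1]
  -- bound the data term
  have hdata : |deltaL1 α t V m| ≤ c 1 * K := by
    have h1 := hbound m hm1 hmM
    have h2 : (t 1 / t m) ^ α = t 1 ^ α * (t m) ^ (-α) := by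
      rw [Real.div_rpow ht1.le htm.le, Real.rpow_neg htm.le, div_eq_mul_inv]
    have h3 : t 1 ^ α * (t m) ^ (-α) ≤ c 1 * K := by
      rw [hKdef]
      have := mul_le_mul_of_nonneg_left hc1_low (by positivity : (0:ℝ) ≤ t 1 ^ α)
      calc t 1 ^ α * (t m) ^ (-α) = t 1 ^ α * ((t m) ^ (-α) / G) * G := by
            field_simp
        _ ≤ t 1 ^ α * c 1 * G := by
            have h4 : t 1 ^ α * ((t m) ^ (-α) / G) ≤ t 1 ^ α * c 1 := this
            exact mul_le_mul_of_nonneg_right h4 hGpos.le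
        _ = c 1 * (G * t 1 ^ α) := by ring
    calc |deltaL1 α t V m| ≤ (t 1 / t m) ^ α := h1
      _ = t 1 ^ α * (t m) ^ (-α) := h2
      _ ≤ c 1 * K := h3
  -- combine
  have hfinal : |c m * V m| ≤ c m * K := by
    calc |c m * V m| ≤ |deltaL1 α t V m| +
        |∑ j ∈ Finset.Icc 1 (m - 1), (c (j + 1) - c j) * V j| := by
          rw [hVm]; exact abs_add_le _ _
      _ ≤ c 1 * K + (c m - c 1) * K := add_le_add hdata hsum_bound
      _ = c m * K := by ring
  have : c m * |V m| ≤ c m * K := by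
    rwa [abs_mul, abs_of_pos hcm_pos] at hfinal
  exact le_of_mul_le_mul_left this hcm_pos
end

section
/- Let α ∈ (0,1), let (H, ⟨·,·⟩) be a real inner product space with norm ‖·‖, and let e⁰, e¹, …, e^M ∈ H. Then for every m ∈ {1,…,M}, ⟨δ_t^α e^m, e^m⟩ ≥ (δ_t^α ν^m) · ‖e^m‖, where δ_t^α e^m ∈ H is the L1 operator applied to the H-valued sequence (e^j) and (ν^j) is the real sequence ν^j := ‖e^j‖. -/
open Real MeasureTheory

/-- The L1 discrete Caputo operator for sequences with values in a real vector space. -/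
noncomputable def deltaL1V {H : Type*} [NormedAddCommGroup H] [NormedSpace ℝ H]
    (α : ℝ) (t : ℕ → ℝ) (V : ℕ → H) (m : ℕ) : H :=
  (1 / Real.Gamma (1 - α)) •
    ∑ j ∈ Finset.Icc 1 m,
      ((∫ s in (t (j - 1))..(t j), (t m - s) ^ (-α)) / (t j - t (j - 1))) •
        (V j - V (j - 1))

/-!
With `d j := ⟪e j, e m⟫ - ‖e j‖ * ‖e m‖`, which is `≤ 0` by Cauchy–Schwarz and vanishes at
`j = m`, the difference of the two sides is `Γ(1-α)⁻¹ * ∑ c j * (d j - d (j - 1))`, where the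
L1 weights `c j` are secant slopes of `x ↦ x ^ (1 - α) / (1 - α)` over `[t m - t j, t m - t (j - 1)]`.
Hence `c j ≥ 0`, and concavity makes `c` nondecreasing in `j`; summation by parts then bounds the
sum below by `c m * d m = 0`.
-/

lemma mul_le_sum_Icc_mul_sub {c d : ℕ → ℝ} {m : ℕ} (hm : 1 ≤ m) (hc1 : 0 ≤ c 1)
    (hc : MonotoneOn c (Set.Icc 1 m)) (hd : ∀ j < m, d j ≤ 0) :
    c m * d m ≤ ∑ j ∈ Finset.Icc 1 m, c j * (d j - d (j - 1)) := by
  induction m, hm using Nat.le_induction with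
  | base =>
    have := mul_nonpos_of_nonneg_of_nonpos hc1 (hd 0 one_pos)
    simp only [Finset.Icc_self, Finset.sum_singleton, Nat.sub_self]
    linarith
  | succ n hn ih =>
    have hcn : c n ≤ c (n + 1) := hc ⟨hn, by omega⟩ ⟨by omega, le_rfl⟩ (by omega)
    have hdn : d n ≤ 0 := hd n (by omega)
    have hsum := ih (hc.mono (Set.Icc_subset_Icc_right (by omega))) fun j hj => hd j (by omega)
    rw [Finset.sum_Icc_succ_top (by omega), Nat.add_sub_cancel]
    nlinarith

/-- The weight of the difference `V j - V (j - 1)` in the L1 operator at time `t m`. -/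
noncomputable def l1Weight (α : ℝ) (t : ℕ → ℝ) (m j : ℕ) : ℝ :=
  (∫ s in (t (j - 1))..(t j), (t m - s) ^ (-α)) / (t j - t (j - 1))

section l1Weight

variable {α : ℝ} {t : ℕ → ℝ} {m : ℕ}

lemma l1Weight_eq_div (hα : α < 1) (j : ℕ) :
    l1Weight α t m j = ((t m - t (j - 1)) ^ (1 - α) - (t m - t j) ^ (1 - α)) /
      ((t m - t (j - 1)) - (t m - t j)) / (1 - α) := by
  rw [l1Weight, integral_sub_rpow_neg hα, sub_sub_sub_cancel_left]
  ring

lemma l1Weight_nonneg (hα : α < 1) (ht : StrictMonoOn t (Set.Iic m)) {j : ℕ} (hj : 1 ≤ j)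
    (hjm : j ≤ m) : 0 ≤ l1Weight α t m j := by
  have hlt : t (j - 1) < t j := ht (by simp; omega) (by simpa using hjm) (by omega)
  have hle : t j ≤ t m := ht.monotoneOn (by simpa using hjm) (by simp) hjm
  rw [l1Weight_eq_div hα]
  refine div_nonneg (div_nonneg (sub_nonneg.2 ?_) (by linarith)) (by linarith)
  exact rpow_le_rpow (by linarith) (by linarith) (by linarith)

lemma l1Weight_monotoneOn (hα₀ : 0 ≤ α) (hα₁ : α < 1) (ht : StrictMonoOn t (Set.Iic m)) :
    MonotoneOn (l1Weight α t m) (Set.Icc 1 m) := by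
  refine monotoneOn_of_le_add_one Set.ordConnected_Icc fun j _ ⟨hj, _⟩ ⟨_, hjm⟩ => ?_
  have h₀ : t (j - 1) < t j := ht (by simp; omega) (by simp; omega) (by omega)
  have h₁ : t j < t (j + 1) := ht (by simp; omega) (by simpa using hjm) (by omega)
  have h₂ : t (j + 1) ≤ t m := ht.monotoneOn (by simpa using hjm) (by simp) hjm
  rw [l1Weight_eq_div hα₁, l1Weight_eq_div hα₁, Nat.add_sub_cancel]
  refine div_le_div_of_nonneg_right ?_ (by linarith)
  exact (concaveOn_rpow (by linarith) (by linarith)).slope_anti_adjacent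
    (Set.mem_Ici.2 (by linarith)) (Set.mem_Ici.2 (by linarith)) (by linarith) (by linarith)

end l1Weight

open scoped RealInnerProductSpace in
lemma inner_deltaL1V_sub_deltaL1_norm_mul_norm {H : Type*} [NormedAddCommGroup H]
    [InnerProductSpace ℝ H] (α : ℝ) (t : ℕ → ℝ) (e : ℕ → H) (m : ℕ) :
    ⟪deltaL1V α t e m, e m⟫ - deltaL1 α t (fun j => ‖e j‖) m * ‖e m‖ =
      1 / Gamma (1 - α) * ∑ j ∈ Finset.Icc 1 m, l1Weight α t m j *
        ((⟪e j, e m⟫ - ‖e j‖ * ‖e m‖) - (⟪e (j - 1), e m⟫ - ‖e (j - 1)‖ * ‖e m‖)) := by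
  simp only [deltaL1V, deltaL1, l1Weight, real_inner_smul_left, sum_inner, inner_sub_left,
    mul_assoc, Finset.sum_mul, ← mul_sub, ← Finset.sum_sub_distrib]
  congr 1
  refine Finset.sum_congr rfl fun j _ => ?_
  ring

open scoped RealInnerProductSpace in
theorem stmt11_general
    (α : ℝ) (hα : α ∈ Set.Ioo (0 : ℝ) 1)
    (M : ℕ) (t : ℕ → ℝ)
    (hmono : ∀ j, j < M → t j < t (j + 1))
    (H : Type*) [NormedAddCommGroup H] [InnerProductSpace ℝ H]
    (e : ℕ → H) :
    ∀ m, 1 ≤ m → m ≤ M →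
      ⟪deltaL1V α t e m, e m⟫ ≥ deltaL1 α t (fun j => ‖e j‖) m * ‖e m‖ := by
  intro m hm hmM
  have ht : StrictMonoOn t (Set.Iic m) :=
    (strictMonoOn_Iic_of_lt_succ hmono).mono (Set.Iic_subset_Iic.2 hmM)
  have hsum := mul_le_sum_Icc_mul_sub (d := fun j => ⟪e j, e m⟫ - ‖e j‖ * ‖e m‖) hm
    (l1Weight_nonneg hα.2 ht le_rfl hm) (l1Weight_monotoneOn hα.1.le hα.2 ht)
    fun j _ => sub_nonpos.2 (real_inner_le_norm _ _)
  simp only [real_inner_self_eq_norm_mul_norm, sub_self, mul_zero] at hsum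
  rw [ge_iff_le, ← sub_nonneg, inner_deltaL1V_sub_deltaL1_norm_mul_norm]
  exact mul_nonneg (one_div_nonneg.2 (Gamma_pos_of_pos (by linarith [hα.2])).le) hsum

open scoped RealInnerProductSpace in
theorem stmt11
    (α T : ℝ) (hα : α ∈ Set.Ioo (0 : ℝ) 1) (hT : 0 < T)
    (M : ℕ) (hM : 1 ≤ M) (t : ℕ → ℝ)
    (ht0 : t 0 = 0) (htM : t M = T)
    (hmono : ∀ j, j < M → t j < t (j + 1))
    (H : Type*) [NormedAddCommGroup H] [InnerProductSpace ℝ H]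
    (e : ℕ → H) :
    ∀ m, 1 ≤ m → m ≤ M →
      ⟪deltaL1V α t e m, e m⟫ ≥ deltaL1 α t (fun j => ‖e j‖) m * ‖e m‖ :=
  stmt11_general α hα M t hmono H e
end
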